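/- arXiv:2409.00870 — 4 statements merged into one kernel-verified Lean document; each statement's English description precedes it below -/
import Mathlib

section
/- Let K and T be inverse semigroups, let T act on K by endomorphisms, and let 𝕂 = ⋃_{e∈E(T)} 𝕂_e, where 𝕂_e = {(a,e) ∈ K×E(T) : e·a = a}, be the Kernel of the congruence induced by the second projection π₂ of the λ-semidirect product K⋊^λT. Equip 𝕂 with the action of T given by t·(a,e) = (t·a, ran(te)) and the surjective homomorphism ε: 𝕂 → E(T), (a,e) ↦ e; then ε satisfies condition (AFR) for this action, and the map ψ: K⋊^λT → 𝕂⋊T, ψ(a,t) = ((a, ran(t)), t), into the resulting full restricted semidirect product is an isomorphism of inverse semigroups which moreover is an isomorphism of normal extensions: ψ maps the Kernel of ker π₂ on K⋊^λT onto the Kernel of ker π₂ on 𝕂⋊T, and (a,t) (ker π₂) (a',t') holds in K⋊^λT if and only if ψ(a,t) (ker π₂) ψ(a',t') holds in 𝕂⋊T. -/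
/-- An inverse semigroup: a semigroup in which every element `a` has a unique
inverse `a⁻¹` satisfying `a * a⁻¹ * a = a` and `a⁻¹ * a * a⁻¹ = a⁻¹`. -/
class InverseSemigroup (S : Type*) extends Semigroup S, Inv S where
  mul_inv_mul : ∀ a : S, a * a⁻¹ * a = a
  inv_mul_inv : ∀ a : S, a⁻¹ * a * a⁻¹ = a⁻¹
  inv_unique : ∀ {a b : S}, a * b * a = a → b * a * b = b → b = a⁻¹

/-- The set of idempotents `E(T)` of a `Mul`-structure. -/
def idemSet (T : Type*) [Mul T] : Set T := {e | e * e = e}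

/-- `ran t = t * t⁻¹`. -/
def iran {T : Type*} [Mul T] [Inv T] (t : T) : T := t * t⁻¹

/-- `dom t = t⁻¹ * t`. -/
def idom {T : Type*} [Mul T] [Inv T] (t : T) : T := t⁻¹ * t

/-- The natural partial order: `a ≤ b` iff `a = e * b` for some idempotent `e`. -/
def nle {T : Type*} [Mul T] (a b : T) : Prop := ∃ e ∈ idemSet T, a = e * b

/-- `b` is an inverse of `a`. -/
def IsInvPair {T : Type*} [Mul T] (a b : T) : Prop := a * b * a = a ∧ b * a * b = b

/-- An action of `T` on `K` by endomorphisms. -/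
def IsAction {K T : Type*} [Mul K] [Mul T] (act : T → K → K) : Prop :=
  (∀ t a b, act t (a * b) = act t a * act t b) ∧
  (∀ t u a, act (t * u) a = act t (act u a))

/-- `ε : K → T` is a (surjective) homomorphism from `K` onto the semilattice
of idempotents `E(T)` of `T`. -/
def IsSurjHomOntoE {K T : Type*} [Mul K] [Mul T] (ε : K → T) : Prop :=
  (∀ a b, ε (a * b) = ε a * ε b) ∧ (∀ a, ε a ∈ idemSet T) ∧
  (∀ e ∈ idemSet T, ∃ a, ε a = e)

/-- Condition (AFR): `e · a = a` iff `ε a ≤ e`, for all `a ∈ K`, `e ∈ E(T)`. -/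
def AFR {K T : Type*} [Mul K] [Mul T] (act : T → K → K) (ε : K → T) : Prop :=
  ∀ (a : K), ∀ e ∈ idemSet T, (act e a = a ↔ nle (ε a) e)

/-- The carrier of the λ-semidirect product `K ⋊^λ T`:
`{(a,t) ∈ K × T : a = ran(t) · a}`. -/
def lsdSet {K T : Type*} [Mul K] [Mul T] [Inv T] (act : T → K → K) :
    Set (K × T) := {p | act (iran p.2) p.1 = p.1}

/-- The multiplication of the λ-semidirect product:
`(a,t)(b,u) = ((ran(tu) · a)(t · b), tu)`. -/
def lsdMul {K T : Type*} [Mul K] [Mul T] [Inv T] (act : T → K → K)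
    (p q : K × T) : K × T :=
  (act (iran (p.2 * q.2)) p.1 * act p.2 q.1, p.2 * q.2)

/-- The carrier of the full restricted semidirect product `K ⋊ T`:
`{(a,t) ∈ K × T : ε a = ran t}`. -/
def rsdSet {K T : Type*} [Mul T] [Inv T] (ε : K → T) : Set (K × T) :=
  {p | ε p.1 = iran p.2}

/-- The multiplication of the full restricted semidirect product:
`(a,t)(b,u) = (a (t · b), tu)`. -/
def rsdMul {K T : Type*} [Mul K] [Mul T] (act : T → K → K)
    (p q : K × T) : K × T :=
  (p.1 * act p.2 q.1, p.2 * q.2)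

/-- The Kernel of the congruence `ker π₂` (equality of second components) on a
subset `C` of a product, with multiplication `m`: all elements of `C` that are
`(ker π₂)`-related to an idempotent of `C`. -/
def pi2Kernel {X Y : Type*} (m : X × Y → X × Y → X × Y) (C : Set (X × Y)) :
    Set (X × Y) :=
  {p | p ∈ C ∧ ∃ q ∈ C, m q q = q ∧ q.2 = p.2}

/-- The Kernel `𝕂 = ⋃_{e ∈ E(T)} 𝕂_e` of `ker π₂` on `K ⋊^λ T`, where
`𝕂_e = {(a,e) ∈ K × E(T) : e · a = a}`. -/
def KK {K T : Type*} [Mul K] [Mul T] (act : T → K → K) : Set (K × T) :=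
  {p | p.2 ∈ idemSet T ∧ act p.2 p.1 = p.1}

/-- The action of `T` on `𝕂` given by `t · (a,e) = (t · a, ran (t e))`. -/
def actKK {K T : Type*} [Mul K] [Mul T] [Inv T] (act : T → K → K)
    (t : T) (p : K × T) : K × T :=
  (act t p.1, iran (t * p.2))

/-- The carrier of the full restricted semidirect product `𝕂 ⋊ T` with respect
to `actKK` and `ε : 𝕂 → E(T), (a,e) ↦ e`. -/
def rsdKKSet {K T : Type*} [Mul K] [Mul T] [Inv T] (act : T → K → K) :
    Set ((K × T) × T) :=
  {P | P.1 ∈ KK act ∧ P.1.2 = iran P.2}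

/-- The multiplication of `𝕂 ⋊ T`; the first components are multiplied inside
`𝕂 ≤ K ⋊^λ T`, i.e. by `lsdMul`. -/
def rsdKKMul {K T : Type*} [Mul K] [Mul T] [Inv T] (act : T → K → K)
    (P Q : (K × T) × T) : (K × T) × T :=
  (lsdMul act P.1 (actKK act P.2 Q.1), P.2 * Q.2)

/-- The map `ψ : K ⋊^λ T → 𝕂 ⋊ T`, `ψ(a,t) = ((a, ran t), t)`. -/
def psiMap {K T : Type*} [Mul T] [Inv T] (p : K × T) : (K × T) × T :=
  ((p.1, iran p.2), p.2)

section ISGaux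
open InverseSemigroup
variable {S : Type*} [InverseSemigroup S]

lemma isg_inv_inv (a : S) : a⁻¹⁻¹ = a :=
  (InverseSemigroup.inv_unique (inv_mul_inv a) (mul_inv_mul a)).symm

lemma isg_idem_inv {e : S} (he : e * e = e) : e⁻¹ = e :=
  (InverseSemigroup.inv_unique (a := e) (b := e) (by rw [he, he]) (by rw [he, he])).symm

lemma isg_idem_mul_idem {e f : S} (he : e * e = e) (hf : f * f = f) :
    (e * f) * (e * f) = e * f := by
  set x := (e * f)⁻¹ with hx
  have key : f * x * e = x := by
    apply InverseSemigroup.inv_unique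
    · have h := mul_inv_mul (e * f)
      calc e * f * (f * x * e) * (e * f)
          = e * (f * f) * x * (e * e) * f := by simp only [mul_assoc]
        _ = e * f * x * (e * f) := by rw [he, hf]; simp only [mul_assoc]
        _ = e * f := h
    · have h := inv_mul_inv (e * f)
      calc f * x * e * (e * f) * (f * x * e)
          = f * (x * (e * (e * (f * (f * (x * e)))))) := by simp only [mul_assoc]
        _ = f * (x * (e * (f * (x * e)))) := by
            rw [← mul_assoc e e, he, ← mul_assoc f f, hf]
        _ = f * (x * (e * f) * x) * e := by simp only [mul_assoc]
        _ = f * x * e := by rw [h]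
  have hxx : x * x = x := by
    conv_lhs => rw [← key]
    have h := inv_mul_inv (e * f)
    calc f * x * e * (f * x * e)
        = f * (x * (e * f) * x) * e := by simp only [mul_assoc]
      _ = f * x * e := by rw [h]
      _ = x := key
  have h2 : e * f = x⁻¹ := by rw [hx, isg_inv_inv]
  have h3 : e * f = x := by rw [h2, isg_idem_inv hxx]
  rw [h3]; exact hxx

lemma isg_idem_comm {e f : S} (he : e * e = e) (hf : f * f = f) :
    e * f = f * e := by
  have hef := isg_idem_mul_idem he hf
  have hfe := isg_idem_mul_idem hf he
  have h : f * e = (e * f)⁻¹ := by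
    apply InverseSemigroup.inv_unique
    · calc e * f * (f * e) * (e * f)
          = e * (f * f) * (e * (e * f)) := by simp only [mul_assoc]
        _ = e * f * (e * f) := by rw [hf, ← mul_assoc e e, he]
        _ = e * f := hef
    · calc f * e * (e * f) * (f * e)
          = f * (e * e) * (f * (f * e)) := by simp only [mul_assoc]
        _ = f * e * (f * e) := by rw [he, ← mul_assoc f f, hf]
        _ = f * e := hfe
  rw [h, isg_idem_inv hef]

lemma isg_iran_idem' (a : S) : a * a⁻¹ * (a * a⁻¹) = a * a⁻¹ := by
  rw [← mul_assoc, mul_inv_mul]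

lemma isg_idom_idem' (a : S) : a⁻¹ * a * (a⁻¹ * a) = a⁻¹ * a := by
  rw [← mul_assoc, inv_mul_inv]

lemma isg_mul_inv_rev (a b : S) : (a * b)⁻¹ = b⁻¹ * a⁻¹ := by
  have hco := isg_idem_comm (isg_iran_idem' b) (isg_idom_idem' a)
  refine (InverseSemigroup.inv_unique ?_ ?_).symm
  · calc a * b * (b⁻¹ * a⁻¹) * (a * b)
        = a * (b * b⁻¹ * (a⁻¹ * a)) * b := by simp only [mul_assoc]
      _ = a * (a⁻¹ * a * (b * b⁻¹)) * b := by rw [hco]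
      _ = a * a⁻¹ * a * (b * b⁻¹ * b) := by simp only [mul_assoc]
      _ = a * b := by rw [mul_inv_mul, mul_inv_mul]
  · calc b⁻¹ * a⁻¹ * (a * b) * (b⁻¹ * a⁻¹)
        = b⁻¹ * (a⁻¹ * a * (b * b⁻¹)) * a⁻¹ := by simp only [mul_assoc]
      _ = b⁻¹ * (b * b⁻¹ * (a⁻¹ * a)) * a⁻¹ := by rw [hco]
      _ = b⁻¹ * b * b⁻¹ * (a⁻¹ * a * a⁻¹) := by simp only [mul_assoc]
      _ = b⁻¹ * a⁻¹ := by rw [inv_mul_inv, inv_mul_inv]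

lemma isg_iran_idem (t : S) : iran t * iran t = iran t := isg_iran_idem' t

lemma isg_iran_mem (t : S) : iran t ∈ idemSet S := isg_iran_idem t

lemma isg_iran_of_idem {e : S} (he : e * e = e) : iran e = e := by
  show e * e⁻¹ = e
  rw [isg_idem_inv he, he]

lemma isg_iran_iran (t : S) : iran (iran t) = iran t := isg_iran_of_idem (isg_iran_idem t)

lemma isg_iran_mul_idem {e : S} (he : e * e = e) (t : S) : iran (t * e) = t * e * t⁻¹ := by
  show t * e * (t * e)⁻¹ = t * e * t⁻¹
  rw [isg_mul_inv_rev t e, isg_idem_inv he]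
  calc t * e * (e * t⁻¹) = t * (e * e) * t⁻¹ := by simp only [mul_assoc]
    _ = t * e * t⁻¹ := by rw [he]

lemma isg_conj_mul {e : S} (he : e * e = e) (t : S) : t * e * t⁻¹ * t = t * e := by
  have hco := isg_idem_comm he (isg_idom_idem' t)
  calc t * e * t⁻¹ * t = t * (e * (t⁻¹ * t)) := by simp only [mul_assoc]
    _ = t * (t⁻¹ * t * e) := by rw [hco]
    _ = t * t⁻¹ * t * e := by simp only [mul_assoc]
    _ = t * e := by rw [mul_inv_mul]

lemma isg_iran_mul_iran (t s : S) : iran (t * iran s) = iran (t * s) := by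
  rw [isg_iran_mul_idem (isg_iran_idem s) t]
  show t * iran s * t⁻¹ = t * s * (t * s)⁻¹
  rw [isg_mul_inv_rev t s]
  show t * (s * s⁻¹) * t⁻¹ = t * s * (s⁻¹ * t⁻¹)
  simp only [mul_assoc]

lemma isg_iran_absorb (t u : S) : iran t * iran (t * u) = iran (t * u) := by
  show t * t⁻¹ * (t * u * (t * u)⁻¹) = t * u * (t * u)⁻¹
  calc t * t⁻¹ * (t * u * (t * u)⁻¹) = t * t⁻¹ * t * (u * (t * u)⁻¹) := by
        simp only [mul_assoc]
    _ = t * (u * (t * u)⁻¹) := by rw [mul_inv_mul]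
    _ = t * u * (t * u)⁻¹ := by simp only [mul_assoc]

lemma isg_iran_prod_idem {e f : S} (he : e * e = e) (hf : f * f = f) :
    iran (e * f) = e * f := isg_iran_of_idem (isg_idem_mul_idem he hf)

lemma isg_iran_mul_mul {e f : S} (he : e * e = e) (hf : f * f = f) (t : S) :
    iran (t * e) * iran (t * f) = iran (t * (e * f)) := by
  have hef := isg_idem_mul_idem he hf
  rw [isg_iran_mul_idem he, isg_iran_mul_idem hf, isg_iran_mul_idem hef]
  calc t * e * t⁻¹ * (t * f * t⁻¹) = t * e * t⁻¹ * t * (f * t⁻¹) := by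
        simp only [mul_assoc]
    _ = t * e * (f * t⁻¹) := by rw [isg_conj_mul he]
    _ = t * (e * f) * t⁻¹ := by simp only [mul_assoc]

end ISGaux

/-- For inverse semigroups `K`, `T` and an action of `T` on `K` by
endomorphisms, the Kernel `𝕂` of `ker π₂` on `K ⋊^λ T`, equipped with the
action `t · (a,e) = (t·a, ran(te))` and `ε : (a,e) ↦ e`, satisfies (AFR), and
`ψ(a,t) = ((a, ran t), t)` is an isomorphism of inverse semigroups from
`K ⋊^λ T` onto the full restricted semidirect product `𝕂 ⋊ T` which is an
isomorphism of normal extensions: it maps the Kernel of `ker π₂` onto the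
Kernel of `ker π₂`, and respects the congruences `ker π₂` on both sides. -/
theorem lsd_iso_rsd_of_kernel {K T : Type*} [InverseSemigroup K]
    [InverseSemigroup T] [Nonempty K]
    (act : T → K → K) (hact : IsAction act) :
    -- `𝕂` is closed under the multiplication of `K ⋊^λ T`
    (∀ p ∈ KK act, ∀ q ∈ KK act, lsdMul act p q ∈ KK act) ∧
    -- `actKK` maps `𝕂` into `𝕂` and is an action of `T` on `𝕂` by endomorphisms
    (∀ (t : T), ∀ p ∈ KK act, actKK act t p ∈ KK act) ∧
    (∀ (t : T), ∀ p ∈ KK act, ∀ q ∈ KK act,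
        actKK act t (lsdMul act p q) = lsdMul act (actKK act t p) (actKK act t q)) ∧
    (∀ (t u : T), ∀ p ∈ KK act, actKK act (t * u) p = actKK act t (actKK act u p)) ∧
    -- `ε = (second projection)` is a surjective homomorphism of `𝕂` onto `E(T)`
    (∀ p ∈ KK act, ∀ q ∈ KK act, (lsdMul act p q).2 = p.2 * q.2) ∧
    (∀ p ∈ KK act, p.2 ∈ idemSet T) ∧
    (∀ e ∈ idemSet T, ∃ p ∈ KK act, p.2 = e) ∧
    -- the action and `ε` satisfy condition (AFR)
    (∀ p ∈ KK act, ∀ e ∈ idemSet T, (actKK act e p = p ↔ nle p.2 e)) ∧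
    -- `ψ` is a bijection of `K ⋊^λ T` onto `𝕂 ⋊ T`
    Set.BijOn psiMap (lsdSet act) (rsdKKSet act) ∧
    -- `ψ` is multiplicative
    (∀ p ∈ lsdSet act, ∀ q ∈ lsdSet act,
        psiMap (lsdMul act p q) = rsdKKMul act (psiMap p) (psiMap q)) ∧
    -- `ψ` maps the Kernel of `ker π₂` on `K ⋊^λ T` onto that of `𝕂 ⋊ T`
    (psiMap '' (pi2Kernel (lsdMul act) (lsdSet act)) =
      {P | P ∈ rsdKKSet act ∧
        ∃ Q ∈ rsdKKSet act, rsdKKMul act Q Q = Q ∧ Q.2 = P.2}) ∧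
    -- `ψ` respects the congruences `ker π₂`
    (∀ p ∈ lsdSet act, ∀ q ∈ lsdSet act,
        (p.2 = q.2 ↔ (psiMap p).2 = (psiMap q).2)) := by
  obtain ⟨hm, hc⟩ := hact
  -- key conjugation fact for the action
  have act_conj : ∀ (t : T) {e : T}, e * e = e → ∀ x : K,
      act (t * e * t⁻¹) (act t x) = act (t * e) x := by
    intro t e he x
    rw [← hc, isg_conj_mul he]
  -- 1. KK is closed under lsdMul
  have hKKmul : ∀ p ∈ KK act, ∀ q ∈ KK act, lsdMul act p q ∈ KK act := by
    rintro ⟨a, e⟩ ⟨he, ha⟩ ⟨b, f⟩ ⟨hf, hb⟩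
    have he' : e * e = e := he
    have hf' : f * f = f := hf
    have hef : (e * f) * (e * f) = e * f := isg_idem_mul_idem he' hf'
    refine ⟨hef, ?_⟩
    show act (e * f) (act (iran (e * f)) a * act e b) = act (iran (e * f)) a * act e b
    rw [isg_iran_prod_idem he' hf', hm]
    congr 1
    · rw [← hc, hef]
    · rw [← hc]
      have h1 : (e * f) * e = e * f := by
        rw [mul_assoc, isg_idem_comm hf' he', ← mul_assoc, he']
      rw [h1, hc, hb]
  -- 2. actKK maps KK into KK
  have hKKact : ∀ (t : T), ∀ p ∈ KK act, actKK act t p ∈ KK act := by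
    rintro t ⟨a, e⟩ ⟨he, ha⟩
    have he' : e * e = e := he
    refine ⟨isg_iran_mem (t * e), ?_⟩
    show act (iran (t * e)) (act t a) = act t a
    rw [isg_iran_mul_idem he', act_conj t he', hc, ha]
  -- 3. equivariance
  have hEquiv : ∀ (t : T), ∀ p ∈ KK act, ∀ q ∈ KK act,
      actKK act t (lsdMul act p q) = lsdMul act (actKK act t p) (actKK act t q) := by
    rintro t ⟨a, e⟩ ⟨he, ha⟩ ⟨b, f⟩ ⟨hf, hb⟩
    have he' : e * e = e := he
    have hf' : f * f = f := hf
    have hef : (e * f) * (e * f) = e * f := isg_idem_mul_idem he' hf'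
    show (act t (act (iran (e * f)) a * act e b), iran (t * (e * f)))
        = (act (iran (iran (t * e) * iran (t * f))) (act t a)
            * act (iran (t * e)) (act t b), iran (t * e) * iran (t * f))
    rw [isg_iran_mul_mul he' hf' t, isg_iran_iran, isg_iran_prod_idem he' hf',
      isg_iran_mul_idem hef, isg_iran_mul_idem he', act_conj t hef, act_conj t he',
      hm, ← hc, ← hc]
  -- 4. composition of the action
  have hComp : ∀ (t u : T), ∀ p ∈ KK act, actKK act (t * u) p
      = actKK act t (actKK act u p) := by
    rintro t u ⟨a, e⟩ ⟨he, ha⟩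
    show (act (t * u) a, iran (t * u * e)) = (act t (act u a), iran (t * iran (u * e)))
    rw [hc, isg_iran_mul_iran, mul_assoc]
  -- surjectivity witness machinery
  have hWitness : ∀ t : T, t * t = t → ∃ b : K, act t b = b ∧ b * b = b := by
    intro t ht
    obtain a₀ := Classical.arbitrary K
    refine ⟨act t (a₀ * a₀⁻¹), ?_, ?_⟩
    · rw [← hc, ht]
    · rw [← hm, isg_iran_idem' a₀]
  -- 7. surjectivity of ε
  have hEps : ∀ e ∈ idemSet T, ∃ p ∈ KK act, p.2 = e := by
    intro e he
    obtain ⟨b, hb, _⟩ := hWitness e he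
    exact ⟨(b, e), ⟨he, hb⟩, rfl⟩
  -- 8. AFR
  have hAFR : ∀ p ∈ KK act, ∀ e ∈ idemSet T, (actKK act e p = p ↔ nle p.2 e) := by
    rintro ⟨a, f⟩ ⟨hf, ha⟩ e he
    have he' : e * e = e := he
    have hf' : f * f = f := hf
    have hIr : iran (e * f) = e * f := isg_iran_prod_idem he' hf'
    constructor
    · intro h
      have h1 : act e a = a := congrArg Prod.fst h
      have h2 : iran (e * f) = (a, f).2 := congrArg Prod.snd h
      rw [hIr] at h2
      refine ⟨f, hf, ?_⟩
      show f = f * e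
      rw [← isg_idem_comm he' hf']
      exact h2.symm
    · rintro ⟨g, hg, hfe⟩
      have hg' : g * g = g := hg
      have hfe' : f = g * e := hfe
      have hef : e * f = f := by
        rw [hfe', ← mul_assoc, isg_idem_comm he' hg', mul_assoc, he']
      have h1 : act e a = a := by
        calc act e a = act e (act f a) := by rw [ha]
          _ = act (e * f) a := (hc e f a).symm
          _ = act f a := by rw [hef]
          _ = a := ha
      show (act e a, iran (e * f)) = (a, f)
      rw [h1, hIr, hef]
  -- 9. BijOn pieces
  have hMaps : Set.MapsTo psiMap (lsdSet act) (rsdKKSet act) := by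
    rintro ⟨a, t⟩ h
    exact ⟨⟨isg_iran_mem t, h⟩, rfl⟩
  have hInj : Set.InjOn psiMap (lsdSet act) := by
    rintro ⟨a, t⟩ _ ⟨b, u⟩ _ h
    have h1 : a = b := congrArg (fun P => P.1.1) h
    have h2 : t = u := congrArg Prod.snd h
    rw [h1, h2]
  have hSurj : Set.SurjOn psiMap (lsdSet act) (rsdKKSet act) := by
    rintro ⟨⟨a, e⟩, t⟩ ⟨⟨he, ha⟩, h2⟩
    have h2' : e = iran t := h2
    subst h2'
    exact ⟨(a, t), ha, rfl⟩
  -- 10. multiplicativity of ψ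
  have hMult : ∀ p ∈ lsdSet act, ∀ q ∈ lsdSet act,
      psiMap (lsdMul act p q) = rsdKKMul act (psiMap p) (psiMap q) := by
    rintro ⟨a, t⟩ hp ⟨b, u⟩ hq
    show ((act (iran (t * u)) a * act t b, iran (t * u)), t * u)
        = ((act (iran (iran t * iran (t * iran u))) a
              * act (iran t) (act t b), iran t * iran (t * iran u)), t * u)
    have h1 : act (iran t) (act t b) = act t b := by
      show act (t * t⁻¹) (act t b) = act t b
      rw [← hc, InverseSemigroup.mul_inv_mul]
    rw [isg_iran_mul_iran t u, isg_iran_absorb t u, isg_iran_iran (t * u), h1]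
  -- 11. kernel descriptions
  have hKerL : pi2Kernel (lsdMul act) (lsdSet act)
      = {p | p ∈ lsdSet act ∧ p.2 ∈ idemSet T} := by
    ext ⟨a, t⟩
    constructor
    · rintro ⟨hp, q, hq, hqq, hq2⟩
      refine ⟨hp, ?_⟩
      have h3 : q.2 = t := hq2
      show t * t = t
      rw [← h3]
      exact congrArg Prod.snd hqq
    · rintro ⟨hp, ht⟩
      have ht' : t * t = t := ht
      obtain ⟨b, hb, hbb⟩ := hWitness t ht'
      refine ⟨hp, ⟨(b, t), ?_, ?_, rfl⟩⟩
      · show act (iran t) b = b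
        rw [isg_iran_of_idem ht', hb]
      · show (act (iran (t * t)) b * act t b, t * t) = (b, t)
        rw [ht', isg_iran_of_idem ht', hb, hbb]
  have hKerR : {P | P ∈ rsdKKSet act ∧
        ∃ Q ∈ rsdKKSet act, rsdKKMul act Q Q = Q ∧ Q.2 = P.2}
      = {P | P ∈ rsdKKSet act ∧ P.2 ∈ idemSet T} := by
    ext P
    constructor
    · rintro ⟨hP, Q, hQ, hQQ, hQ2⟩
      refine ⟨hP, ?_⟩
      show P.2 * P.2 = P.2
      rw [← hQ2]
      exact congrArg Prod.snd hQQ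
    · rintro ⟨hP, ht⟩
      have ht' : P.2 * P.2 = P.2 := ht
      obtain ⟨b, hb, hbb⟩ := hWitness P.2 ht'
      refine ⟨hP, ⟨((b, P.2), P.2), ⟨⟨ht, hb⟩, (isg_iran_of_idem ht').symm⟩, ?_, rfl⟩⟩
      have e1 : actKK act P.2 (b, P.2) = (b, P.2) := by
        show (act P.2 b, iran (P.2 * P.2)) = (b, P.2)
        rw [ht', isg_iran_of_idem ht', hb]
      have e2 : lsdMul act (b, P.2) (b, P.2) = (b, P.2) := by
        show (act (iran (P.2 * P.2)) b * act P.2 b, P.2 * P.2) = (b, P.2)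
        rw [ht', isg_iran_of_idem ht', hb, hbb]
      show (lsdMul act (b, P.2) (actKK act P.2 (b, P.2)), P.2 * P.2) = ((b, P.2), P.2)
      rw [e1, e2, ht']
  have hKerIm : psiMap '' (pi2Kernel (lsdMul act) (lsdSet act)) =
      {P | P ∈ rsdKKSet act ∧
        ∃ Q ∈ rsdKKSet act, rsdKKMul act Q Q = Q ∧ Q.2 = P.2} := by
    rw [hKerL, hKerR]
    ext P
    constructor
    · rintro ⟨p, ⟨hp, hidem⟩, rfl⟩
      exact ⟨hMaps hp, hidem⟩
    · rintro ⟨hP, hidem⟩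
      obtain ⟨p, hp, hpP⟩ := hSurj hP
      refine ⟨p, ⟨hp, ?_⟩, hpP⟩
      have : p.2 = P.2 := congrArg Prod.snd hpP
      rw [show p.2 = P.2 from this]
      exact hidem
  exact ⟨hKKmul, hKKact, hEquiv, hComp, fun _ _ _ _ => rfl, fun p hp => hp.1, hEps,
    hAFR, ⟨hMaps, hInj, hSurj⟩, hMult, hKerIm, fun p _ q _ => Iff.rfl⟩
end

section
/- Let (K,η,T) be a normal extension triple. A normal extension of K by T along η is embeddable, as a normal extension, in a λ-semidirect product K̄⋊^λT for some inverse semigroup K̄ acted on by T if and only if it is embeddable, as a normal extension, in the full restricted semidirect product 𝕂̄⋊T, where 𝕂̄ is the Kernel of the congruence induced by the second projection of K̄⋊^λT, equipped with the action t·(a,e) = (t·a, ran(te)) and the homomorphism ε(a,e) = e. -/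
/-- `φ : S → X × T` is an embedding of the normal extension determined by
`τ : S → T` (with Kernel `KerS`) into the normal extension on the subset `C` of
`X × T` with multiplication `m`, regarded as a normal extension via the
congruence induced by the second projection. -/
def EmbedsAsNormalExt {S X T : Type*} [Mul S] (τ : S → T) (KerS : Set S)
    (C : Set (X × T)) (m : X × T → X × T → X × T) : Prop :=
  ∃ φ : S → X × T,
    Function.Injective φ ∧ (∀ s, φ s ∈ C) ∧
    (∀ s s', φ (s * s') = m (φ s) (φ s')) ∧
    (∀ s ∈ KerS, φ s ∈ pi2Kernel m C) ∧
    (∀ s s', τ s = τ s' ↔ (φ s).2 = (φ s').2)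

section ISGLemmas
variable {T : Type*} [InverseSemigroup T]

private lemma mi (a : T) : a * a⁻¹ * a = a := InverseSemigroup.mul_inv_mul a
private lemma im (a : T) : a⁻¹ * a * a⁻¹ = a⁻¹ := InverseSemigroup.inv_mul_inv a

private lemma rw3 {a b : T} (h : a * b * a = a) : ∀ z : T, a * (b * (a * z)) = a * z :=
  fun z => by conv_lhs => rw [← mul_assoc, ← mul_assoc, h]

private lemma rw2 {a b c : T} (h : a * b = c) : ∀ z : T, a * (b * z) = c * z :=
  fun z => by rw [← mul_assoc, h]

private lemma inv_inv' (a : T) : a⁻¹⁻¹ = a :=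
  (InverseSemigroup.inv_unique (im a) (mi a)).symm

private lemma idem_inv {e : T} (he : e * e = e) : e⁻¹ = e :=
  (InverseSemigroup.inv_unique (by rw [he, he]) (by rw [he, he])).symm

private lemma ranI (a : T) : (a * a⁻¹) * (a * a⁻¹) = a * a⁻¹ := by
  simp only [mul_assoc]
  rw [show a⁻¹ * (a * a⁻¹) = a⁻¹ from by rw [← mul_assoc, im]]

private lemma domI (a : T) : (a⁻¹ * a) * (a⁻¹ * a) = a⁻¹ * a := by
  simp only [mul_assoc]
  rw [show a * (a⁻¹ * a) = a from by rw [← mul_assoc, mi]]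

private lemma idem_mul_idem {e f : T} (he : e * e = e) (hf : f * f = f) :
    (e * f) * (e * f) = e * f := by
  have he' : ∀ z : T, e * (e * z) = e * z := rw2 he
  have hf' : ∀ z : T, f * (f * z) = f * z := rw2 hf
  have A' : e * (f * ((e*f)⁻¹ * (e * f))) = e * f := by
    simpa only [mul_assoc] using mi (e * f)
  have B' : (e*f)⁻¹ * (e * (f * (e*f)⁻¹)) = (e*f)⁻¹ := by
    simpa only [mul_assoc] using im (e * f)
  have B'' : (e*f)⁻¹ * (e * (f * ((e*f)⁻¹ * e))) = (e*f)⁻¹ * e := by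
    have := congrArg (· * e) B'
    simpa only [mul_assoc] using this
  have hxe : f * (e*f)⁻¹ * e = (e*f)⁻¹ := by
    apply InverseSemigroup.inv_unique
    · simp only [mul_assoc, he', hf']; exact A'
    · simp only [mul_assoc, he', hf']; rw [B'']
  have hxx : (e*f)⁻¹ * (e*f)⁻¹ = (e*f)⁻¹ := by
    have h3 : (f * (e*f)⁻¹ * e) * (f * (e*f)⁻¹ * e) = (e*f)⁻¹ * (e*f)⁻¹ := by rw [hxe]
    rw [← h3]
    simp only [mul_assoc]
    rw [B'', ← mul_assoc, hxe]
  have hef : e * f = (e*f)⁻¹ := by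
    conv_lhs => rw [← inv_inv' (e * f)]
    rw [idem_inv hxx]
  calc (e*f) * (e*f) = (e*f)⁻¹ * (e*f)⁻¹ := by rw [← hef]
    _ = (e*f)⁻¹ := hxx
    _ = e * f := hef.symm

private lemma idem_comm {e f : T} (he : e * e = e) (hf : f * f = f) :
    e * f = f * e := by
  have hef := idem_mul_idem he hf
  have hfe := idem_mul_idem hf he
  have h1 : (e * f) * (f * e) * (e * f) = e * f := by
    simp only [mul_assoc, rw2 he, rw2 hf]
    simpa only [mul_assoc] using hef
  have h2 : (f * e) * (e * f) * (f * e) = f * e := by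
    simp only [mul_assoc, rw2 he, rw2 hf]
    simpa only [mul_assoc] using hfe
  exact ((InverseSemigroup.inv_unique h1 h2).trans (idem_inv hef)).symm

private lemma mul_inv_rev' (a b : T) : (a * b)⁻¹ = b⁻¹ * a⁻¹ := by
  have h1 : (a * b) * (b⁻¹ * a⁻¹) * (a * b) = a * b := by
    calc (a * b) * (b⁻¹ * a⁻¹) * (a * b) = a * ((b * b⁻¹) * (a⁻¹ * a)) * b := by
          simp only [mul_assoc]
      _ = a * ((a⁻¹ * a) * (b * b⁻¹)) * b := by rw [idem_comm (ranI b) (domI a)]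
      _ = (a * a⁻¹ * a) * (b * b⁻¹ * b) := by simp only [mul_assoc]
      _ = a * b := by rw [mi, mi]
  have h2 : (b⁻¹ * a⁻¹) * (a * b) * (b⁻¹ * a⁻¹) = b⁻¹ * a⁻¹ := by
    calc (b⁻¹ * a⁻¹) * (a * b) * (b⁻¹ * a⁻¹)
        = b⁻¹ * ((a⁻¹ * a) * (b * b⁻¹)) * a⁻¹ := by simp only [mul_assoc]
      _ = b⁻¹ * ((b * b⁻¹) * (a⁻¹ * a)) * a⁻¹ := by rw [idem_comm (domI a) (ranI b)]
      _ = (b⁻¹ * b * b⁻¹) * (a⁻¹ * a * a⁻¹) := by simp only [mul_assoc]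
      _ = b⁻¹ * a⁻¹ := by rw [im, im]
  exact (InverseSemigroup.inv_unique h1 h2).symm

private lemma iranI (t : T) : iran t * iran t = iran t := ranI t

private lemma idem_iran {e : T} (he : e * e = e) : iran e = e := by
  unfold iran; rw [idem_inv he, he]

private lemma L1 (t u : T) : iran t * iran (t * u) = iran (t * u) := by
  unfold iran
  rw [mul_inv_rev' t u]
  calc t * t⁻¹ * (t * u * (u⁻¹ * t⁻¹)) = (t * t⁻¹ * t) * (u * (u⁻¹ * t⁻¹)) := by
        simp only [mul_assoc]
    _ = t * u * (u⁻¹ * t⁻¹) := by rw [mi, mul_assoc]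

private lemma L2 (t u : T) : iran (t * iran u) = iran (t * u) := by
  unfold iran
  rw [mul_inv_rev' t (u * u⁻¹), idem_inv (ranI u), mul_inv_rev' t u]
  simp only [mul_assoc, rw3 (im u)]

private lemma iran_mul_self (t : T) : iran t * t = t := mi t

private lemma iran_iran (t : T) : iran (iran t) = iran t := idem_iran (iranI t)

end ISGLemmas

universe u

/-- Let `(K, η, T)` be a normal extension triple, and let
`(ι, S, τ)` be a normal extension of `K` by `T` along `η`.  Then this normal
extension is embeddable, as a normal extension, in a λ-semidirect product
`K̄ ⋊^λ T` for some inverse semigroup `K̄` acted on by `T`, if and only if it is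
embeddable, as a normal extension, in the full restricted semidirect product
`𝕂̄ ⋊ T`, where `𝕂̄` is the Kernel of the congruence induced by the second
projection of `K̄ ⋊^λ T`, equipped with the action
`t · (a,e) = (t·a, ran(te))` and the homomorphism `ε(a,e) = e`. -/
theorem embeds_lsd_iff_embeds_rsd_kernel {K T S : Type u}
    [InverseSemigroup K] [InverseSemigroup T] [InverseSemigroup S]
    -- `(K, η, T)` is a normal extension triple
    (η : K → T) (hη : IsSurjHomOntoE η)
    -- `(ι, S, τ)` is a normal extension of `K` by `T` along `η`
    (ι : K → S) (hιinj : Function.Injective ι)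
    (hιhom : ∀ a b : K, ι (a * b) = ι a * ι b)
    (τ : S → T) (hτsurj : Function.Surjective τ)
    (hτhom : ∀ s s' : S, τ (s * s') = τ s * τ s')
    (hKer : Set.range ι = {s : S | ∃ e : S, e * e = e ∧ τ s = τ e})
    (hτι : ∀ a : K, τ (ι a) = η a) :
    (∃ (Kb : Type u) (_ : InverseSemigroup Kb) (act : T → Kb → Kb),
        IsAction act ∧
        EmbedsAsNormalExt τ (Set.range ι) (lsdSet act) (lsdMul act)) ↔
    (∃ (Kb : Type u) (_ : InverseSemigroup Kb) (act : T → Kb → Kb),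
        IsAction act ∧
        EmbedsAsNormalExt τ (Set.range ι) (rsdKKSet act) (rsdKKMul act)) := by
  constructor
  · rintro ⟨Kb, instKb, act, hact, φ, hinj, hmem, hhom, hker, hτ2⟩
    obtain ⟨hamul, hacomp⟩ := hact
    have hmem' : ∀ s, act (iran (φ s).2) (φ s).1 = (φ s).1 := hmem
    have hactE : ∀ (t : T) (b : Kb), act (iran t) (act t b) = act t b := fun t b => by
      rw [← hacomp, iran_mul_self]
    have hmemψ : ∀ s, ((((φ s).1, iran (φ s).2), (φ s).2) : (Kb × T) × T) ∈
        rsdKKSet act := fun s => ⟨⟨iranI (φ s).2, hmem' s⟩, rfl⟩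
    refine ⟨Kb, instKb, act, ⟨hamul, hacomp⟩,
      fun s => (((φ s).1, iran (φ s).2), (φ s).2), ?_, hmemψ, ?_, ?_, ?_⟩
    · intro s s' h
      apply hinj
      have h1 : (φ s).1 = (φ s').1 := congrArg (fun P => P.1.1) h
      have h2 : (φ s).2 = (φ s').2 := congrArg (fun P => P.2) h
      exact Prod.ext h1 h2
    · intro s s'
      have h := hhom s s'
      show (((φ (s * s')).1, iran (φ (s * s')).2), (φ (s * s')).2) = _
      rw [h]
      dsimp only [lsdMul, rsdKKMul, actKK]
      simp only [L2, L1, iran_iran, hactE]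
    · intro s hs
      obtain ⟨hφC, q, hqC, hqq, hq2⟩ := hker s hs
      obtain ⟨c, v⟩ := q
      have hv : v * v = v := congrArg Prod.snd hqq
      have hcv : act v c = c := by
        have h0 : act (iran v) c = c := hqC
        rwa [idem_iran hv] at h0
      have hcc : c * c = c := by
        have h1 : act (iran (v * v)) c * act v c = c := congrArg Prod.fst hqq
        rwa [hv, idem_iran hv, hcv] at h1
      refine ⟨hmemψ s, ((c, v), v), ⟨⟨hv, hcv⟩, (idem_iran hv).symm⟩, ?_, hq2⟩
      show (lsdMul act (c, v) (actKK act v (c, v)), v * v) = ((c, v), v)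
      dsimp only [actKK, lsdMul]
      simp only [hv, idem_iran hv, hcv, hcc]
    · intro s s'
      exact hτ2 s s'
  · rintro ⟨Kb, instKb, act, hact, ψ, hinj, hmem, hhom, hker, hτ2⟩
    obtain ⟨hamul, hacomp⟩ := hact
    have hactE : ∀ (t : T) (b : Kb), act (iran t) (act t b) = act t b := fun t b => by
      rw [← hacomp, iran_mul_self]
    have hm2 : ∀ s, act (ψ s).1.2 (ψ s).1.1 = (ψ s).1.1 := fun s => (hmem s).1.2
    have hm3 : ∀ s, (ψ s).1.2 = iran (ψ s).2 := fun s => (hmem s).2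
    have hmemφ : ∀ s, (((ψ s).1.1, (ψ s).2) : Kb × T) ∈ lsdSet act := fun s => by
      show act (iran (ψ s).2) (ψ s).1.1 = (ψ s).1.1
      rw [← hm3]; exact hm2 s
    refine ⟨Kb, instKb, act, ⟨hamul, hacomp⟩,
      fun s => ((ψ s).1.1, (ψ s).2), ?_, hmemφ, ?_, ?_, ?_⟩
    · intro s s' h
      apply hinj
      have h1 : (ψ s).1.1 = (ψ s').1.1 := congrArg (fun P => P.1) h
      have h2 : (ψ s).2 = (ψ s').2 := congrArg (fun P => P.2) h
      have h12 : (ψ s).1.2 = (ψ s').1.2 := by rw [hm3, hm3, h2]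
      exact Prod.ext (Prod.ext h1 h12) h2
    · intro s s'
      have h := hhom s s'
      show ((ψ (s * s')).1.1, (ψ (s * s')).2) = _
      rw [h]
      dsimp only [rsdKKMul, lsdMul, actKK]
      rw [hm3 s, hm3 s']
      simp only [L2, L1, iran_iran, hactE]
    · intro s hs
      obtain ⟨hC, Q, hQC, hQQ, hQ2⟩ := hker s hs
      obtain ⟨⟨a, e⟩, t⟩ := Q
      obtain ⟨⟨he, hea⟩, het⟩ := hQC
      have ht : t * t = t := congrArg Prod.snd hQQ
      have het' : e = t := het.trans (idem_iran ht)
      subst het'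
      have h1 : act (iran (e * iran (e * e))) a * act e (act e a) = a :=
        congrArg (fun P => P.1.1) hQQ
      simp only [ht, idem_iran ht, hea] at h1
      refine ⟨hmemφ s, (a, e), ?_, ?_, hQ2⟩
      · show act (iran e) a = a
        rw [idem_iran ht]; exact hea
      · show (act (iran (e * e)) a * act e a, e * e) = (a, e)
        simp only [ht, idem_iran ht, hea, h1]
    · intro s s'
      exact hτ2 s s'
end

section
/- Suppose K and T are inverse semigroups, T acts on K by endomorphisms, and ε: K → E(T) is a surjective homomorphism. Then the condition (for all a ∈ K and e ∈ E(T): e·a = a if and only if ε(a) ≤ e) holds if and only if the following two properties hold: (i) ε(a)·a = a for every a ∈ K, and (ii) ε(t·a) = ran(t ε(a)) for every a ∈ K and t ∈ T. -/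
namespace ISg
open InverseSemigroup
variable {S : Type*} [InverseSemigroup S]

lemma inv_invol (a : S) : a⁻¹⁻¹ = a :=
  (inv_unique (inv_mul_inv a) (mul_inv_mul a)).symm

lemma idem_inv {e : S} (he : e * e = e) : e⁻¹ = e :=
  (inv_unique (by rw [he, he]) (by rw [he, he])).symm

lemma ran_idem (a : S) : (a * a⁻¹) * (a * a⁻¹) = a * a⁻¹ := by
  rw [← mul_assoc, mul_inv_mul]

lemma dom_idem (a : S) : (a⁻¹ * a) * (a⁻¹ * a) = a⁻¹ * a := by
  rw [← mul_assoc, inv_mul_inv]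

lemma idem_mul_idem {e f : S} (he : e * e = e) (hf : f * f = f) :
    (e * f) * (e * f) = e * f := by
  set x := (e * f)⁻¹ with hx
  have h1 : (e * f) * x * (e * f) = e * f := mul_inv_mul _
  have h2 : x * (e * f) * x = x := inv_mul_inv _
  have h2' : x * (e * (f * x)) = x := by simpa only [mul_assoc] using h2
  have c1 : (e * f) * (f * x * e) * (e * f) = e * f := by
    calc (e * f) * (f * x * e) * (e * f)
        = e * ((f * f) * (x * ((e * e) * f))) := by simp only [mul_assoc]
      _ = e * (f * (x * (e * f))) := by rw [he, hf]
      _ = (e * f) * x * (e * f) := by simp only [mul_assoc]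
      _ = e * f := h1
  have c2 : (f * x * e) * (e * f) * (f * x * e) = f * x * e := by
    calc (f * x * e) * (e * f) * (f * x * e)
        = f * (x * ((e * e) * ((f * f) * (x * e)))) := by simp only [mul_assoc]
      _ = f * (x * (e * (f * (x * e)))) := by rw [he, hf]
      _ = f * ((x * (e * (f * x))) * e) := by simp only [mul_assoc]
      _ = f * x * e := by rw [h2', mul_assoc]
  have hxe : f * x * e = x := inv_unique c1 c2
  have hxx : x * x = x := by
    have key : (f * x * e) * (f * x * e) = f * x * e := by
      calc (f * x * e) * (f * x * e)
          = f * ((x * (e * (f * x))) * e) := by simp only [mul_assoc]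
        _ = f * (x * e) := by rw [h2']
        _ = f * x * e := (mul_assoc ..).symm
    rw [← hxe]; exact key
  have hef : e * f = x := by
    rw [← inv_invol (e * f), ← hx]; exact idem_inv hxx
  rw [hef]; exact hxx

lemma idem_comm {e f : S} (he : e * e = e) (hf : f * f = f) : e * f = f * e := by
  have hef := idem_mul_idem he hf
  have hfe := idem_mul_idem hf he
  have d1 : (e * f) * (f * e) * (e * f) = e * f := by
    calc (e * f) * (f * e) * (e * f)
        = e * ((f * f) * ((e * e) * f)) := by simp only [mul_assoc]
      _ = e * (f * (e * f)) := by rw [he, hf]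
      _ = (e * f) * (e * f) := by simp only [mul_assoc]
      _ = e * f := hef
  have d2 : (f * e) * (e * f) * (f * e) = f * e := by
    calc (f * e) * (e * f) * (f * e)
        = f * ((e * e) * ((f * f) * e)) := by simp only [mul_assoc]
      _ = f * (e * (f * e)) := by rw [he, hf]
      _ = (f * e) * (f * e) := by simp only [mul_assoc]
      _ = f * e := hfe
  have : f * e = (e * f)⁻¹ := inv_unique d1 d2
  rw [this, idem_inv hef]

lemma mul_inv_rev (a b : S) : (a * b)⁻¹ = b⁻¹ * a⁻¹ := by
  have comm := idem_comm (ran_idem b) (dom_idem a)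
  have w1 : (a * b) * (b⁻¹ * a⁻¹) * (a * b) = a * b := by
    calc (a * b) * (b⁻¹ * a⁻¹) * (a * b)
        = a * ((b * b⁻¹) * (a⁻¹ * a) * b) := by simp only [mul_assoc]
      _ = a * ((a⁻¹ * a) * (b * b⁻¹) * b) := by rw [comm]
      _ = (a * a⁻¹ * a) * (b * b⁻¹ * b) := by simp only [mul_assoc]
      _ = a * b := by rw [mul_inv_mul, mul_inv_mul]
  have w2 : (b⁻¹ * a⁻¹) * (a * b) * (b⁻¹ * a⁻¹) = b⁻¹ * a⁻¹ := by
    calc (b⁻¹ * a⁻¹) * (a * b) * (b⁻¹ * a⁻¹)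
        = b⁻¹ * ((a⁻¹ * a) * (b * b⁻¹) * a⁻¹) := by simp only [mul_assoc]
      _ = b⁻¹ * ((b * b⁻¹) * (a⁻¹ * a) * a⁻¹) := by rw [comm]
      _ = (b⁻¹ * b * b⁻¹) * (a⁻¹ * a * a⁻¹) := by simp only [mul_assoc]
      _ = b⁻¹ * a⁻¹ := by rw [inv_mul_inv, inv_mul_inv]
  exact (inv_unique w1 w2).symm

lemma conj_idem (s : S) {e : S} (he : e * e = e) :
    (s * (e * s⁻¹)) * (s * (e * s⁻¹)) = s * (e * s⁻¹) := by
  calc (s * (e * s⁻¹)) * (s * (e * s⁻¹))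
      = s * ((e * (s⁻¹ * s)) * (e * s⁻¹)) := by simp only [mul_assoc]
    _ = s * (((s⁻¹ * s) * e) * (e * s⁻¹)) := by rw [idem_comm he (dom_idem s)]
    _ = s * ((s⁻¹ * s) * ((e * e) * s⁻¹)) := by simp only [mul_assoc]
    _ = (s * s⁻¹ * s) * (e * s⁻¹) := by rw [he]; simp only [mul_assoc]
    _ = s * (e * s⁻¹) := by rw [mul_inv_mul]

end ISg

open InverseSemigroup

/-- For inverse semigroups `K`, `T`, an action of `T` on `K` by
endomorphisms and a surjective homomorphism `ε : K → E(T)`, condition (AFR)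
holds iff (i) `ε(a)·a = a` for all `a` and (ii) `ε(t·a) = ran (t * ε a)`
for all `a ∈ K`, `t ∈ T`. -/
theorem condAFR_iff_AE7_AE8 {K T : Type*} [InverseSemigroup K]
    [InverseSemigroup T] (act : T → K → K) (hact : IsAction act)
    (ε : K → T) (hε : IsSurjHomOntoE ε) :
    AFR act ε ↔
      ((∀ a : K, act (ε a) a = a) ∧
       (∀ (a : K) (t : T), ε (act t a) = iran (t * ε a))) := by
  obtain ⟨hdist, hcomp⟩ := hact
  obtain ⟨hm, hE, hsurj⟩ := hε
  have memE : ∀ a : K, ε a * ε a = ε a := fun a => hE a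
  have nle_of : ∀ {e f : T}, f * f = f → nle e f → e * f = e := by
    rintro e f hf ⟨g, hgI, rfl⟩
    rw [mul_assoc, hf]
  have hiran : ∀ (t e : T), e * e = e → iran (t * e) = t * (e * t⁻¹) := by
    intro t e he
    show (t * e) * (t * e)⁻¹ = t * (e * t⁻¹)
    rw [ISg.mul_inv_rev, ISg.idem_inv he, mul_assoc, ← mul_assoc e e, he]
  constructor
  · intro h
    have hEA : ∀ a : K, act (ε a) a = a := fun a =>
      (h a (ε a) (hE a)).2 ⟨ε a, hE a, (memE a).symm⟩
    refine ⟨hEA, ?_⟩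
    have U : ∀ (s : T) (b : K), ε (act s b) * (s * (ε b * s⁻¹)) = ε (act s b) := by
      intro s b
      have he' : (s * (ε b * s⁻¹)) * (s * (ε b * s⁻¹)) = s * (ε b * s⁻¹) :=
        ISg.conj_idem s (memE b)
      have hfix : act (s * (ε b * s⁻¹)) (act s b) = act s b := by
        rw [← hcomp]
        have key : (s * (ε b * s⁻¹)) * s = s * ε b := by
          calc (s * (ε b * s⁻¹)) * s = s * (ε b * (s⁻¹ * s)) := by simp only [mul_assoc]
            _ = s * ((s⁻¹ * s) * ε b) := by rw [ISg.idem_comm (memE b) (ISg.dom_idem s)]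
            _ = (s * s⁻¹ * s) * ε b := by simp only [mul_assoc]
            _ = s * ε b := by rw [mul_inv_mul]
        rw [key, hcomp, hEA]
      exact nle_of he' ((h (act s b) _ he').1 hfix)
    have I : ∀ (u : T), u * u = u → ∀ a : K, ε (act u a) = u * ε a := by
      intro u hu a
      obtain ⟨x, hx⟩ := hsurj u hu
      have hxfix : act u x = x := (h x u hu).2 ⟨u, hu, by rw [hx, hu]⟩
      have hue : (u * ε a) * (u * ε a) = u * ε a := by
        calc (u * ε a) * (u * ε a) = u * ((ε a * u) * ε a) := by simp only [mul_assoc]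
          _ = u * ((u * ε a) * ε a) := by rw [ISg.idem_comm (memE a) hu]
          _ = (u * u) * (ε a * ε a) := by simp only [mul_assoc]
          _ = u * ε a := by rw [hu, memE a]
      have hxa : act u (x * a) = x * a := by
        apply (h (x * a) u hu).2
        refine ⟨u * ε a, hue, ?_⟩
        rw [hm, hx]
        calc u * ε a = (u * u) * ε a := by rw [hu]
          _ = u * (u * ε a) := by rw [mul_assoc]
          _ = u * (ε a * u) := by rw [ISg.idem_comm hu (memE a)]
          _ = (u * ε a) * u := by rw [mul_assoc]
      have hsplit : x * a = x * act u a := by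
        conv_lhs => rw [← hxa, hdist, hxfix]
      have h1 : u * ε a = u * ε (act u a) := by
        have := congrArg ε hsplit
        rwa [hm, hm, hx] at this
      have hd : act u (act u a) = act u a := by rw [← hcomp, hu]
      have h2 : ε (act u a) * u = ε (act u a) :=
        nle_of hu ((h (act u a) u hu).1 hd)
      have h2' : u * ε (act u a) = ε (act u a) := by
        rw [← ISg.idem_comm (memE (act u a)) hu]; exact h2
      exact h2'.symm.trans h1.symm
    intro a t
    rw [hiran t (ε a) (memE a)]
    have hdom : (t⁻¹ * t) * (t⁻¹ * t) = t⁻¹ * t := ISg.dom_idem t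
    have hg : ε (act (t⁻¹ * t) a) = (t⁻¹ * t) * ε a := I _ hdom a
    have hb : act t (act (t⁻¹ * t) a) = act t a := by
      rw [← hcomp, ← mul_assoc, mul_inv_mul]
    have hsimp : t * (((t⁻¹ * t) * ε a) * t⁻¹) = t * (ε a * t⁻¹) := by
      calc t * (((t⁻¹ * t) * ε a) * t⁻¹)
          = (t * t⁻¹ * t) * (ε a * t⁻¹) := by simp only [mul_assoc]
        _ = t * (ε a * t⁻¹) := by rw [mul_inv_mul]
    have hupper : ε (act t a) * (t * (ε a * t⁻¹)) = ε (act t a) := by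
      have := U t (act (t⁻¹ * t) a)
      rwa [hb, hg, hsimp] at this
    have hlower' : ((t⁻¹ * t) * ε a) * (t⁻¹ * (ε (act t a) * t)) = (t⁻¹ * t) * ε a := by
      have := U t⁻¹ (act t a)
      rwa [← hcomp, hg, ISg.inv_invol] at this
    have commf : ε (act t a) * (t * t⁻¹) = (t * t⁻¹) * ε (act t a) :=
      ISg.idem_comm (memE (act t a)) (ISg.ran_idem t)
    have he'f : (t * (ε a * t⁻¹)) * ε (act t a) = t * (ε a * t⁻¹) := by
      have step : t * (((t⁻¹ * t) * ε a) * t⁻¹) =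
          (t * (((t⁻¹ * t) * ε a) * t⁻¹)) * ε (act t a) := by
        conv_lhs => rw [← hlower']
        calc t * ((((t⁻¹ * t) * ε a) * (t⁻¹ * (ε (act t a) * t))) * t⁻¹)
            = t * (((t⁻¹ * t) * ε a) * (t⁻¹ * (ε (act t a) * (t * t⁻¹)))) := by
              simp only [mul_assoc]
          _ = t * (((t⁻¹ * t) * ε a) * (t⁻¹ * ((t * t⁻¹) * ε (act t a)))) := by
              rw [commf]
          _ = t * (((t⁻¹ * t) * ε a) * ((t⁻¹ * t * t⁻¹) * ε (act t a))) := by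
              simp only [mul_assoc]
          _ = t * (((t⁻¹ * t) * ε a) * (t⁻¹ * ε (act t a))) := by rw [inv_mul_inv]
          _ = (t * (((t⁻¹ * t) * ε a) * t⁻¹)) * ε (act t a) := by simp only [mul_assoc]
      rw [hsimp] at step
      exact step.symm
    have comm2 : ε (act t a) * (t * (ε a * t⁻¹)) = (t * (ε a * t⁻¹)) * ε (act t a) :=
      ISg.idem_comm (memE (act t a)) (ISg.conj_idem t (memE a))
    exact hupper.symm.trans (comm2.trans he'f)
  · rintro ⟨h1, h2⟩
    have h2' : ∀ (a : K) (t : T), ε (act t a) = t * (ε a * t⁻¹) := fun a t =>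
      (h2 a t).trans (hiran t (ε a) (memE a))
    intro a e heI
    have he : e * e = e := heI
    have hcm : ε a * e = e * ε a := ISg.idem_comm (memE a) he
    constructor
    · intro hfix
      have key : ε a = e * (ε a * e) := by
        calc ε a = ε (act e a) := by rw [hfix]
          _ = e * (ε a * e⁻¹) := h2' a e
          _ = e * (ε a * e) := by rw [ISg.idem_inv he]
      have : ε a = ε a * e := by
        calc ε a = e * (ε a * e) := key
          _ = e * (e * ε a) := by rw [hcm]
          _ = (e * e) * ε a := by rw [mul_assoc]
          _ = e * ε a := by rw [he]
          _ = ε a * e := hcm.symm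
      exact ⟨ε a, hE a, this⟩
    · intro hle
      have h3 : ε a * e = ε a := nle_of he hle
      have h4 : e * ε a = ε a := hcm.symm.trans h3
      calc act e a = act e (act (ε a) a) := by rw [h1]
        _ = act (e * ε a) a := (hcomp e (ε a) a).symm
        _ = act (ε a) a := by rw [h4]
        _ = a := h1 a
end

section
/- Let θ be a congruence on an inverse semigroup S. The map ()^↓: Ω(S,θ) → Π(S/θ), ω ↦ ω^↓, where ω^↓ is defined by ω^↓(θ(s)) = θ(ωs) and (θ(s))ω^↓ = θ(sω) for s ∈ S, is a well-defined surjective homomorphism, and its kernel is the congruence Ω(θ) on Ω(S,θ) given by: ω Ω(θ) ω' if and only if ωs θ ω's and sω θ sω' for every s ∈ S. -/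
/-- A bitranslation of a semigroup `S`: a linked pair `(l, r)` of a left
translation and a right translation, written `ω s := l s`, `s ω := r s`. -/
@[ext]
structure Bitrans (S : Type*) [Mul S] where
  l : S → S
  r : S → S
  l_mul : ∀ s t : S, l (s * t) = l s * t
  r_mul : ∀ s t : S, r (s * t) = s * r t
  linked : ∀ s t : S, s * l t = r s * t

namespace Bitrans

variable {S : Type*} [Mul S]

/-- Product of bitranslations: `(ωω')s = ω(ω's)` and `s(ωω') = (sω)ω'`. -/
instance : Mul (Bitrans S) where
  mul ω ω' :=
    { l := fun s => ω.l (ω'.l s)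
      r := fun s => ω'.r (ω.r s)
      l_mul := fun s t => by
        show ω.l (ω'.l (s * t)) = ω.l (ω'.l s) * t
        rw [ω'.l_mul, ω.l_mul]
      r_mul := fun s t => by
        show ω'.r (ω.r (s * t)) = s * ω'.r (ω.r t)
        rw [ω.r_mul, ω'.r_mul]
      linked := fun s t => by
        show s * ω.l (ω'.l t) = ω'.r (ω.r s) * t
        rw [ω.linked, ω'.linked] }

/-- The translational hull `Ω(S)` (all bitranslations) is a semigroup. -/
instance : Semigroup (Bitrans S) where
  mul_assoc a b c := by ext s <;> rfl

end Bitrans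

/-- The inner bitranslation `π_s` induced by `s`. -/
def innerBitrans {S : Type*} [Semigroup S] (s : S) : Bitrans S where
  l := fun x => s * x
  r := fun x => x * s
  l_mul := fun x y => (mul_assoc s x y).symm
  r_mul := fun x y => mul_assoc x y s
  linked := fun x y => (mul_assoc x s y).symm

/-- `Π(S)`, the set of inner bitranslations of `S`. -/
def innerSet (S : Type*) [Semigroup S] : Set (Bitrans S) :=
  Set.range (innerBitrans (S := S))

/-- A bitranslation of `S` respects the congruence `θ`. -/
def RespectsCon {S : Type*} [Mul S] (θ : Con S) (ω : Bitrans S) : Prop :=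
  ∀ a b : S, θ a b → θ (ω.l a) (ω.l b) ∧ θ (ω.r a) (ω.r b)

/-- The bitranslation of `S/θ` induced by `ω` is the inner bitranslation
induced by some `u ∈ S/θ`. -/
def InducedInnerCon {S : Type*} [Mul S] (θ : Con S) (ω : Bitrans S) : Prop :=
  ∃ u : θ.Quotient, ∀ s : S,
    ((ω.l s : S) : θ.Quotient) = u * (s : θ.Quotient) ∧
    ((ω.r s : S) : θ.Quotient) = (s : θ.Quotient) * u

/-- The translational hull `Ω(S, θ)` of the normal extension `(S, θ)`: all
bitranslations of `S` respecting `θ` whose induced bitranslation on `S/θ`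
is inner. -/
def OmegaNE {S : Type*} [Mul S] (θ : Con S) : Set (Bitrans S) :=
  {ω | RespectsCon θ ω ∧ InducedInnerCon θ ω}

/-- The congruence `Ω(θ)` on `Ω(S, θ)`: `ω Ω(θ) ω'` iff `ωs θ ω's` and
`sω θ sω'` for every `s ∈ S`. -/
def OmegaCon {S : Type*} [Mul S] (θ : Con S) (ω ω' : Bitrans S) : Prop :=
  ∀ s : S, θ (ω.l s) (ω'.l s) ∧ θ (ω.r s) (ω'.r s)

/-- `ω ∈ Ω(S, θ)` induces the bitranslation `Ω` of `S/θ`, i.e.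
`Ω.l(θ(s)) = θ(ωs)` and `(θ(s))Ω.r = θ(sω)` for all `s ∈ S`. -/
def Induces {S : Type*} [Mul S] (θ : Con S) (ω : Bitrans S)
    (Ω : Bitrans θ.Quotient) : Prop :=
  ∀ s : S,
    Ω.l (s : θ.Quotient) = ((ω.l s : S) : θ.Quotient) ∧
    Ω.r (s : θ.Quotient) = ((ω.r s : S) : θ.Quotient)

/-- A bitranslation is inner. -/
def IsInner {M : Type*} [Mul M] (Ω : Bitrans M) : Prop :=
  ∃ u : M, ∀ x : M, Ω.l x = u * x ∧ Ω.r x = x * u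

/-- The induced bitranslation on the quotient, for `ω` respecting `θ`. -/
def liftBitrans {S : Type*} [Semigroup S] (θ : Con S) (ω : Bitrans S)
    (h : RespectsCon θ ω) : Bitrans θ.Quotient where
  l := fun x => Quotient.liftOn' x (fun s => ((ω.l s : S) : θ.Quotient))
    (fun a b hab => θ.eq.2 (h a b hab).1)
  r := fun x => Quotient.liftOn' x (fun s => ((ω.r s : S) : θ.Quotient))
    (fun a b hab => θ.eq.2 (h a b hab).2)
  l_mul := fun x y => by
    induction x using Quotient.inductionOn'
    induction y using Quotient.inductionOn'
    show ((ω.l (_ * _) : S) : θ.Quotient) = _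
    rw [ω.l_mul]; rfl
  r_mul := fun x y => by
    induction x using Quotient.inductionOn'
    induction y using Quotient.inductionOn'
    show ((ω.r (_ * _) : S) : θ.Quotient) = _
    rw [ω.r_mul]; rfl
  linked := fun x y => by
    induction x using Quotient.inductionOn' with | h a => ?_
    induction y using Quotient.inductionOn' with | h b => ?_
    show (a : θ.Quotient) * ((ω.l b : S) : θ.Quotient) =
      ((ω.r a : S) : θ.Quotient) * (b : θ.Quotient)
    rw [← Con.coe_mul, ← Con.coe_mul, ω.linked]

theorem liftBitrans_induces {S : Type*} [Semigroup S] (θ : Con S)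
    (ω : Bitrans S) (h : RespectsCon θ ω) : Induces θ ω (liftBitrans θ ω h) :=
  fun _ => ⟨rfl, rfl⟩

theorem induces_unique {S : Type*} [Semigroup S] (θ : Con S) (ω : Bitrans S)
    {Ω Ω' : Bitrans θ.Quotient} (h : Induces θ ω Ω) (h' : Induces θ ω Ω') :
    Ω' = Ω := by
  ext x
  · induction x using Quotient.inductionOn' with
    | h s => exact ((h' s).1).trans ((h s).1).symm
  · induction x using Quotient.inductionOn' with
    | h s => exact ((h' s).2).trans ((h s).2).symm

/-- For a congruence `θ` on an inverse semigroup `S`, the map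
`()^↓ : Ω(S,θ) → Π(S/θ)` defined by `ω^↓(θ(s)) = θ(ωs)`, `(θ(s))ω^↓ = θ(sω)`
is a well-defined surjective homomorphism, and its kernel is the congruence
`Ω(θ)`. -/
theorem induced_map_surjective_hom {S : Type*} [InverseSemigroup S]
    (θ : Con S) :
    -- well-definedness: each `ω ∈ Ω(S,θ)` induces a unique bitranslation of
    -- `S/θ`, which is inner
    (∀ ω ∈ OmegaNE θ, ∃ Ω : Bitrans θ.Quotient,
        Induces θ ω Ω ∧ IsInner Ω ∧
        ∀ Ω' : Bitrans θ.Quotient, Induces θ ω Ω' → Ω' = Ω) ∧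
    -- `()^↓` is a homomorphism (and `Ω(S,θ)` is closed under multiplication)
    (∀ ω ∈ OmegaNE θ, ∀ ω' ∈ OmegaNE θ,
        ω * ω' ∈ OmegaNE θ ∧
        ∀ (Ω Ω' : Bitrans θ.Quotient), Induces θ ω Ω → Induces θ ω' Ω' →
          Induces θ (ω * ω') (Ω * Ω')) ∧
    -- `()^↓` is surjective onto `Π(S/θ)`
    (∀ Ω : Bitrans θ.Quotient, IsInner Ω → ∃ ω ∈ OmegaNE θ, Induces θ ω Ω) ∧
    -- the kernel of `()^↓` is `Ω(θ)`
    (∀ ω ∈ OmegaNE θ, ∀ ω' ∈ OmegaNE θ,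
        ((∃ Ω : Bitrans θ.Quotient, Induces θ ω Ω ∧ Induces θ ω' Ω) ↔
          OmegaCon θ ω ω')) := by
  constructor
  · rintro ω ⟨hr, u, hu⟩
    refine ⟨liftBitrans θ ω hr, liftBitrans_induces θ ω hr, ⟨u, ?_⟩,
      fun Ω' h' => induces_unique θ ω (liftBitrans_induces θ ω hr) h'⟩
    intro x
    induction x using Quotient.inductionOn' with
    | h s => exact hu s
  refine ⟨?_, ?_, ?_⟩
  · rintro ω ⟨hr, u, hu⟩ ω' ⟨hr', u', hu'⟩
    constructor
    · refine ⟨fun a b hab => ⟨(hr _ _ (hr' a b hab).1).1, (hr' _ _ (hr a b hab).2).2⟩,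
        u * u', fun s => ⟨?_, ?_⟩⟩
      · show ((ω.l (ω'.l s) : S) : θ.Quotient) = _
        rw [(hu _).1, (hu' s).1, mul_assoc]
      · show ((ω'.r (ω.r s) : S) : θ.Quotient) = _
        rw [(hu' _).2, (hu s).2, mul_assoc]
    · intro Ω Ω' hΩ hΩ' s
      constructor
      · show Ω.l (Ω'.l _) = ((ω.l (ω'.l s) : S) : θ.Quotient)
        rw [(hΩ' s).1, (hΩ _).1]
      · show Ω'.r (Ω.r _) = ((ω'.r (ω.r s) : S) : θ.Quotient)
        rw [(hΩ s).2, (hΩ' _).2]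
  · rintro Ω ⟨u, hu⟩
    obtain ⟨a, rfl⟩ := Quotient.exists_rep u
    refine ⟨innerBitrans a, ⟨fun x y hxy => ⟨θ.mul (θ.refl a) hxy, θ.mul hxy (θ.refl a)⟩,
      ⟨(a : θ.Quotient), fun s => ⟨rfl, rfl⟩⟩⟩, fun s => ⟨?_, ?_⟩⟩
    · rw [(hu _).1]; rfl
    · rw [(hu _).2]; rfl
  · rintro ω ⟨hr, -⟩ ω' ⟨hr', -⟩
    constructor
    · rintro ⟨Ω, hΩ, hΩ'⟩ s
      exact ⟨θ.eq.1 ((hΩ s).1.symm.trans (hΩ' s).1),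
        θ.eq.1 ((hΩ s).2.symm.trans (hΩ' s).2)⟩
    · intro hcon
      refine ⟨liftBitrans θ ω hr, liftBitrans_induces θ ω hr, fun s => ⟨?_, ?_⟩⟩
      · show ((ω.l s : S) : θ.Quotient) = _
        exact θ.eq.2 (hcon s).1
      · show ((ω.r s : S) : θ.Quotient) = _
        exact θ.eq.2 (hcon s).2
end
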